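/- Let S ⊆ ℕ^d be a Frobenius generalized numerical semigroup with Frobenius gap F(S). Then g(S) ≤ (‖F(S)‖ − g(S)) · t(S); equivalently, g(S)/(‖F(S)‖ − g(S)) ≤ t(S). -/

import Mathlib

open Finset

/-- A generalized numerical semigroup (GNS) in `ℕ^d`: contains `0`, is closed under
componentwise addition, and has finite complement. -/
def IsGNS {d : ℕ} (S : Set (Fin d → ℕ)) : Prop :=
  (0 : Fin d → ℕ) ∈ S ∧ (∀ a ∈ S, ∀ b ∈ S, a + b ∈ S) ∧ Sᶜ.Finite

/-- A relaxed monomial order on `ℕ^d`: a (strict) total order `r` such that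
`r v w → r v (w + u)` and `0` is below every nonzero element. -/
def IsRMO {d : ℕ} (r : (Fin d → ℕ) → (Fin d → ℕ) → Prop) : Prop :=
  IsStrictTotalOrder (Fin d → ℕ) r ∧
  (∀ v w u : Fin d → ℕ, r v w → r v (w + u)) ∧
  (∀ v : Fin d → ℕ, v ≠ 0 → r 0 v)

/-- `F` is the Frobenius gap of `S` with respect to the order `r`, i.e. the
`r`-maximum of the gap set `ℕ^d \ S`. -/
def IsFrobGapWrt {d : ℕ} (S : Set (Fin d → ℕ))
    (r : (Fin d → ℕ) → (Fin d → ℕ) → Prop) (F : Fin d → ℕ) : Prop :=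
  F ∉ S ∧ ∀ x, x ∉ S → x ≠ F → r x F

/-- `F` is a Frobenius allowable gap of `S`: it is the Frobenius gap with respect to
some relaxed monomial order. -/
def FrobAllowable {d : ℕ} (S : Set (Fin d → ℕ)) (F : Fin d → ℕ) : Prop :=
  ∃ r, IsRMO r ∧ IsFrobGapWrt S r F

/-- `F` is a maximal gap of `S` with respect to the natural (componentwise)
partial order on `ℕ^d`. -/
def MaxGap {d : ℕ} (S : Set (Fin d → ℕ)) (F : Fin d → ℕ) : Prop :=
  F ∉ S ∧ ∀ x, x ∉ S → F ≤ x → x = F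

/-- The set of Frobenius allowable gaps of `S`, i.e. the maximal elements of the gap
set under the natural partial order. -/
def FA {d : ℕ} (S : Set (Fin d → ℕ)) : Set (Fin d → ℕ) := {F | MaxGap S F}

/-- The set of pseudo-Frobenius gaps of `S`. -/
def PF {d : ℕ} (S : Set (Fin d → ℕ)) : Set (Fin d → ℕ) :=
  {P | P ∉ S ∧ ∀ s ∈ S, s ≠ 0 → P + s ∈ S}

/-- `S` is quasi-irreducible: for every gap `x`, either `2x` is Frobenius allowable or
`F - x ∈ S` for some Frobenius allowable gap `F`. -/
def QuasiIrreducible {d : ℕ} (S : Set (Fin d → ℕ)) : Prop :=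
  ∀ x, x ∉ S → (x + x ∈ FA S ∨ ∃ F ∈ FA S, ∃ s ∈ S, x + s = F)

/-- `S` is a Frobenius GNS with Frobenius gap `F`: the gap set has `F` as its unique
maximal element under the natural partial order. -/
def IsFrobeniusGNS {d : ℕ} (S : Set (Fin d → ℕ)) (F : Fin d → ℕ) : Prop :=
  IsGNS S ∧ MaxGap S F ∧ ∀ x, MaxGap S x → x = F

/-- `‖F‖ = ∏ i (F^(i) + 1)`, the number of lattice points in the box `[0, F]`. -/
def normF {d : ℕ} (F : Fin d → ℕ) : ℕ := ∏ i, (F i + 1)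

/-- `N(F)`: the number of Frobenius GNS in `ℕ^d` with Frobenius gap `F`. -/
noncomputable def NF {d : ℕ} (F : Fin d → ℕ) : ℕ :=
  {S : Set (Fin d → ℕ) | IsFrobeniusGNS S F}.ncard

/-! Every gap `x` lies below the Frobenius gap `F` and below some pseudo-Frobenius gap `P`
with `P - x ∈ S`; since `P - x ≤ F`, the assignment `x ↦ (P - x, P)` injects the gaps into
`(S ∩ [0, F]) × PF(S)`, and `S ∩ [0, F]` has `‖F‖ - g(S)` elements. -/

section

variable {d : ℕ} {S : Set (Fin d → ℕ)} {F x : Fin d → ℕ}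

theorem exists_maxGap_le (hfin : Sᶜ.Finite) (hx : x ∉ S) : ∃ y, MaxGap S y ∧ x ≤ y := by
  obtain ⟨y, hxy, hy⟩ := hfin.exists_le_maximal hx
  exact ⟨y, ⟨hy.1, fun z hz hyz => (hy.eq_of_le hz hyz).symm⟩, hxy⟩

theorem IsFrobeniusGNS.le_of_notMem (h : IsFrobeniusGNS S F) (hx : x ∉ S) : x ≤ F := by
  obtain ⟨y, hy, hxy⟩ := exists_maxGap_le h.1.2.2 hx
  exact h.2.2 y hy ▸ hxy

/-- A maximal gap of `x + S` is pseudo-Frobenius. -/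
theorem IsGNS.exists_mem_PF_add (hS : IsGNS S) (hx : x ∉ S) :
    ∃ P ∈ PF S, ∃ s ∈ S, x + s = P := by
  obtain ⟨h0, hadd, hfin⟩ := hS
  set G := {y | y ∉ S ∧ ∃ s ∈ S, x + s = y}
  have hGfin : G.Finite := hfin.subset fun y hy => hy.1
  obtain ⟨P, -, hP⟩ := hGfin.exists_le_maximal (⟨hx, 0, h0, add_zero x⟩ : x ∈ G)
  obtain ⟨hPS, s₀, hs₀, rfl⟩ := hP.1
  refine ⟨x + s₀, ⟨hPS, fun s hs hs0 => ?_⟩, s₀, hs₀, rfl⟩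
  by_contra hsS
  have hmem : x + s₀ + s ∈ G := ⟨hsS, s₀ + s, hadd s₀ hs₀ s hs, (add_assoc x s₀ s).symm⟩
  exact hs0 (add_eq_left.mp (hP.eq_of_le hmem le_self_add).symm)

theorem ncard_compl_le_ncard_inter_Iic_mul (hS : IsGNS S) (hle : Sᶜ ⊆ Set.Iic F) :
    Sᶜ.ncard ≤ (S ∩ Set.Iic F).ncard * (PF S).ncard := by
  choose! P hPF s hs hsP using fun x (hx : x ∈ Sᶜ) => hS.exists_mem_PF_add hx
  have hmaps : Set.MapsTo (fun x => (s x, P x)) Sᶜ ((S ∩ Set.Iic F) ×ˢ PF S) :=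
    fun x hx => ⟨⟨hs x hx, le_trans (hsP x hx ▸ le_add_self) (hle (hPF x hx).1)⟩, hPF x hx⟩
  have hinj : Set.InjOn (fun x => (s x, P x)) Sᶜ := by
    intro a ha b hb hab
    obtain ⟨hs_eq, hP_eq⟩ : s a = s b ∧ P a = P b := Prod.ext_iff.mp hab
    apply add_right_cancel (b := s a)
    rw [hsP a ha, hP_eq, hs_eq, hsP b hb]
  have hfin : ((S ∩ Set.Iic F) ×ˢ PF S).Finite :=
    ((Set.finite_Iic F).inter_of_right S).prod (hS.2.2.subset fun y hy => hy.1)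
  rw [← Set.ncard_prod]
  exact Set.ncard_le_ncard_of_injOn _ hmaps hinj hfin

theorem ncard_Iic_eq_normF (F : Fin d → ℕ) : (Set.Iic F).ncard = normF F := by
  rw [← Finset.coe_Iic, Set.ncard_coe_finset, Pi.card_Iic]
  simp [normF]

theorem ncard_compl_add_ncard_inter_Iic (hle : Sᶜ ⊆ Set.Iic F) :
    Sᶜ.ncard + (S ∩ Set.Iic F).ncard = normF F := by
  rw [← ncard_Iic_eq_normF, ← Set.ncard_inter_add_ncard_sdiff_eq_ncard _ S (Set.finite_Iic F),
    Set.sdiff_eq, Set.inter_eq_right.mpr hle, Set.inter_comm, add_comm]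

end

/-- For a Frobenius GNS `S`, `g(S) ≤ (‖F(S)‖ - g(S)) · t(S)`. -/
theorem genus_le_type_bound {d : ℕ} (S : Set (Fin d → ℕ)) (F : Fin d → ℕ)
    (h : IsFrobeniusGNS S F) :
    (Sᶜ.ncard : ℤ) ≤ ((normF F : ℤ) - (Sᶜ.ncard : ℤ)) * ((PF S).ncard : ℤ) := by
  have hle : Sᶜ ⊆ Set.Iic F := fun x hx => h.le_of_notMem hx
  rw [← ncard_compl_add_ncard_inter_Iic hle, Nat.cast_add, add_sub_cancel_left]
  exact_mod_cast ncard_compl_le_ncard_inter_Iic_mul h.1 hle
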